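/- Let b : ℝ → ℝ be continuously differentiable and 1-periodic, let β, γ, λ ∈ ℝ, and set r := β + γ·b. Suppose ψ⁺ : ℝ → ℝ is twice continuously differentiable, 1-periodic, positive on ℝ, and satisfies ψ⁺'' + (b + 2λ)ψ⁺' + (λ² + λ b + r)ψ⁺ = k⁺ ψ⁺ on ℝ for some k⁺ ∈ ℝ, and suppose ψ⁻ : ℝ → ℝ is twice continuously differentiable, 1-periodic, positive on ℝ, and satisfies ψ⁻'' − (b + 2λ)ψ⁻' + (λ² + λ b + r)ψ⁻ = k⁻ ψ⁻ on ℝ for some k⁻ ∈ ℝ. Then k⁺ = k⁻. -/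

import Mathlib

/-!
Since `r = β + γ b`, the operator factors as `𝓛_λ[r;b] = (D + b + λ - γ)(D + γ + λ) + μ` with
`μ = β + γ²`, and `𝓛_{-λ}[r;-b] = (D - b - λ + γ)(D - γ - λ) + μ`. Hence `f = ψ⁺' + (γ + λ)ψ⁺` and
`g = ψ⁻' - (γ + λ)ψ⁻` satisfy `f' = (k⁺ - μ)ψ⁺ - u f` and `g' = (k⁻ - μ)ψ⁻ + u g` with
`u = b + λ - γ`. Integrating `(ψ⁺ψ⁻)'` and `(fg)'` over a period gives `∫ ψ⁺g + ∫ ψ⁻f = 0` and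
`(k⁺ - μ) ∫ ψ⁺g + (k⁻ - μ) ∫ ψ⁻f = 0`, so if `k⁺ ≠ k⁻` both integrals vanish and `f`, `g` have
zeros. A periodic function with a zero has a zero where its derivative is `≥ 0` and one where it
is `≤ 0`; when the derivative at zeros is `c` times a positive function this forces `c = 0`.
Thus `k⁺ = μ = k⁻`.
-/

open Set Filter Topology intervalIntegral Function

theorem Function.Periodic.deriv {f : ℝ → ℝ} {T : ℝ} (h : Periodic f T) :
    Periodic (deriv f) T := fun x => by
  rw [← deriv_comp_add_const, show (fun y => f (y + T)) = f from funext h]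

theorem exists_eq_zero_deriv_nonneg_of_neg_of_pos {φ : ℝ → ℝ} (hφ : Differentiable ℝ φ)
    {a c : ℝ} (hac : a < c) (ha : φ a < 0) (hc : 0 < φ c) :
    ∃ z, φ z = 0 ∧ 0 ≤ deriv φ z := by
  set S := Icc a c ∩ φ ⁻¹' Iic 0
  have hbdd : BddAbove S := ⟨c, fun x hx => hx.1.2⟩
  have hzS : sSup S ∈ S := (isClosed_Icc.inter (isClosed_Iic.preimage hφ.continuous)).csSup_mem
    ⟨a, ⟨le_rfl, hac.le⟩, ha.le⟩ hbdd
  set z := sSup S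
  have hzc : z < c := hzS.1.2.lt_of_ne fun h => (h ▸ hzS.2 : φ c ≤ 0).not_gt hc
  have hright : ∀ᶠ x in 𝓝[>] z, 0 < φ x := by
    filter_upwards [Ioo_mem_nhdsGT hzc] with x hx
    by_contra! hle
    exact hx.1.not_ge (le_csSup hbdd ⟨⟨hzS.1.1.trans hx.1.le, hx.2.le⟩, hle⟩)
  have hz : φ z = 0 := le_antisymm hzS.2 <| ge_of_tendsto
    (hφ.continuous.continuousAt.mono_left nhdsWithin_le_nhds) (hright.mono fun _ h => h.le)
  refine ⟨z, hz, ge_of_tendsto ((hasDerivAt_iff_tendsto_slope.mp (hφ z).hasDerivAt).mono_left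
    (nhdsGT_le_nhdsNE z)) ?_⟩
  filter_upwards [hright, self_mem_nhdsWithin] with x hx (hzx : z < x)
  rw [slope_def_field, hz, sub_zero]
  exact div_nonneg hx.le (sub_nonneg.2 hzx.le)

theorem exists_eq_zero_deriv_nonneg_of_periodic {φ : ℝ → ℝ} {T : ℝ} (hper : Periodic φ T)
    (hT : 0 < T) (hφ : Differentiable ℝ φ) (h₀ : ∃ z, φ z = 0) :
    ∃ z, φ z = 0 ∧ 0 ≤ deriv φ z := by
  obtain ⟨z, hz⟩ := h₀
  by_cases hnonpos : ∀ x, φ x ≤ 0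
  · exact ⟨z, hz, (IsLocalMax.deriv_eq_zero (.of_forall fun x => hz ▸ hnonpos x)).ge⟩
  by_cases hnonneg : ∀ x, 0 ≤ φ x
  · exact ⟨z, hz, (IsLocalMin.deriv_eq_zero (.of_forall fun x => hz ▸ hnonneg x)).ge⟩
  push Not at hnonpos hnonneg
  obtain ⟨x₁, hx₁⟩ := hnonneg
  obtain ⟨x₂, hx₂⟩ := hnonpos
  obtain ⟨n, hn⟩ := exists_nat_gt ((x₁ - x₂) / T)
  refine exists_eq_zero_deriv_nonneg_of_neg_of_pos hφ ?_ (hper.sub_nat_mul_eq n ▸ hx₁) hx₂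
  rw [div_lt_iff₀ hT] at hn
  linarith

theorem exists_mem_Icc_eq_zero_of_intervalIntegral_eq_zero {F : ℝ → ℝ} {a b : ℝ} (hab : a < b)
    (hF : ContinuousOn F (Icc a b)) (hint : ∫ x in a..b, F x = 0) : ∃ z ∈ Icc a b, F z = 0 := by
  have hFi : IntervalIntegrable F MeasureTheory.volume a b := hF.intervalIntegrable_of_Icc hab.le
  obtain ⟨x, hx, hFx⟩ : ∃ x ∈ Icc a b, 0 ≤ F x := by
    by_contra! h
    have := intervalIntegral_pos_of_pos_on hFi.neg
      (fun x hx => neg_pos.2 (h x (Ioo_subset_Icc_self hx))) hab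
    simp [integral_neg, hint] at this
  obtain ⟨y, hy, hFy⟩ : ∃ y ∈ Icc a b, F y ≤ 0 := by
    by_contra! h
    exact (intervalIntegral_pos_of_pos_on hFi (fun x hx => h x (Ioo_subset_Icc_self hx)) hab).ne'
      hint
  obtain ⟨z, hz, hFz⟩ := isPreconnected_Icc.intermediate_value hy hx hF ⟨hFy, hFx⟩
  exact ⟨z, hz, hFz⟩

theorem eq_zero_of_periodic_of_deriv_eq_mul_at_zeros {φ ψ w : ℝ → ℝ} {e T : ℝ}
    (hper : Periodic φ T) (hT : 0 < T) (hφ : Differentiable ℝ φ) (hψ : ∀ x, 0 < ψ x)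
    (hzero : ∀ x, φ x = 0 → deriv φ x = e * ψ x) (hw : ContinuousOn w (Icc 0 T))
    (hwpos : ∀ x ∈ Icc 0 T, 0 < w x) (hint : ∫ x in 0..T, w x * φ x = 0) : e = 0 := by
  obtain ⟨z, hzI, hz⟩ := exists_mem_Icc_eq_zero_of_intervalIntegral_eq_zero hT
    (hw.mul hφ.continuous.continuousOn) hint
  have h₀ : φ z = 0 := (mul_eq_zero.1 hz).resolve_left (hwpos z hzI).ne'
  obtain ⟨z₁, hz₁, hd₁⟩ := exists_eq_zero_deriv_nonneg_of_periodic hper hT hφ ⟨z, h₀⟩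
  obtain ⟨z₂, hz₂, hd₂⟩ := exists_eq_zero_deriv_nonneg_of_periodic (hper.comp Neg.neg) hT hφ.neg
    ⟨z, by simp [h₀]⟩
  rw [hzero z₁ hz₁] at hd₁
  simp only [comp_def, deriv.fun_neg, neg_eq_zero] at hz₂ hd₂
  rw [hzero z₂ hz₂, neg_nonneg] at hd₂
  exact le_antisymm (nonpos_of_mul_nonpos_left hd₂ (hψ z₂)) (nonneg_of_mul_nonneg_left hd₁ (hψ z₁))

theorem Function.Periodic.intervalIntegral_deriv_eq_zero {F F' : ℝ → ℝ} {T : ℝ}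
    (hper : Periodic F T) (hF : ∀ x, HasDerivAt F (F' x) x) (hF' : Continuous F') (a : ℝ) :
    ∫ x in a..a + T, F' x = 0 := by
  rw [integral_eq_sub_of_hasDerivAt (fun x _ => hF x) (hF'.intervalIntegrable _ _), hper a,
    sub_self]

theorem hasDerivAt_deriv_add_const_mul {ψ u : ℝ → ℝ} {v μ k : ℝ} (hψ₁ : Differentiable ℝ ψ)
    (hψ₂ : Differentiable ℝ (deriv ψ))
    (heq : ∀ x, deriv (deriv ψ) x + (u x + v) * deriv ψ x + (u x * v + μ) * ψ x = k * ψ x)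
    (x : ℝ) :
    HasDerivAt (fun y => deriv ψ y + v * ψ y)
      ((k - μ) * ψ x - u x * (deriv ψ x + v * ψ x)) x :=
  ((hψ₂ x).hasDerivAt.add ((hψ₁ x).hasDerivAt.const_mul v)).congr_deriv
    (by linear_combination heq x)

theorem eq_of_periodic_adjoint_system {ψp ψm f g u : ℝ → ℝ} {v cp cm T : ℝ} (hT : 0 < T)
    (hψpper : Periodic ψp T) (hψmper : Periodic ψm T) (hfper : Periodic f T)
    (hgper : Periodic g T) (hψppos : ∀ x, 0 < ψp x) (hψmpos : ∀ x, 0 < ψm x)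
    (hψp : ∀ x, HasDerivAt ψp (f x - v * ψp x) x) (hψm : ∀ x, HasDerivAt ψm (g x + v * ψm x) x)
    (hf : ∀ x, HasDerivAt f (cp * ψp x - u x * f x) x)
    (hg : ∀ x, HasDerivAt g (cm * ψm x + u x * g x) x) :
    cp = cm := by
  have hcont {F F' : ℝ → ℝ} (hF : ∀ x, HasDerivAt F (F' x) x) : Continuous F :=
    continuous_iff_continuousAt.2 fun x => (hF x).continuousAt
  have hpg : Continuous fun x => ψp x * g x := (hcont hψp).mul (hcont hg)
  have hmf : Continuous fun x => ψm x * f x := (hcont hψm).mul (hcont hf)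
  have hprod : ∫ x in 0..T, (ψm x * f x + ψp x * g x) = 0 := by
    simpa using (hψpper.mul hψmper).intervalIntegral_deriv_eq_zero
      (F' := fun x => ψm x * f x + ψp x * g x)
      (fun x => ((hψp x).mul (hψm x)).congr_deriv (by ring)) (hmf.add hpg) 0
  have hfg : ∫ x in 0..T, (cp * (ψp x * g x) + cm * (ψm x * f x)) = 0 := by
    simpa using (hfper.mul hgper).intervalIntegral_deriv_eq_zero
      (F' := fun x => cp * (ψp x * g x) + cm * (ψm x * f x))
      (fun x => ((hf x).mul (hg x)).congr_deriv (by ring))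
      ((hpg.const_mul cp).add (hmf.const_mul cm)) 0
  rw [integral_add (hmf.intervalIntegrable _ _) (hpg.intervalIntegrable _ _)] at hprod
  rw [integral_add ((hpg.const_mul cp).intervalIntegrable _ _)
    ((hmf.const_mul cm).intervalIntegrable _ _), integral_const_mul, integral_const_mul] at hfg
  by_contra hne
  have hIp : ∫ x in 0..T, ψp x * g x = 0 := by
    have : (cp - cm) * ∫ x in 0..T, ψp x * g x = 0 := by linear_combination hfg - cm * hprod
    exact (mul_eq_zero.1 this).resolve_left (sub_ne_zero.2 hne)
  have hcm := eq_zero_of_periodic_of_deriv_eq_mul_at_zeros hgper hT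
    (fun x => (hg x).differentiableAt) hψmpos
    (fun x hx => by rw [(hg x).deriv, hx, mul_zero, add_zero])
    (hcont hψp).continuousOn (fun x _ => hψppos x) hIp
  have hcp := eq_zero_of_periodic_of_deriv_eq_mul_at_zeros hfper hT
    (fun x => (hf x).differentiableAt) hψppos
    (fun x hx => by rw [(hf x).deriv, hx, mul_zero, sub_zero])
    (hcont hψm).continuousOn (fun x _ => hψmpos x) (by linear_combination hprod - hIp)
  exact hne (hcp.trans hcm.symm)

theorem stmt4 (b : ℝ → ℝ) (β γ lam : ℝ)
    (r : ℝ → ℝ) (hr : r = fun x => β + γ * b x)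
    (ψp ψm : ℝ → ℝ) (kp km : ℝ)
    (hψp : ContDiff ℝ 2 ψp) (hψpper : Function.Periodic ψp 1) (hψppos : ∀ x, 0 < ψp x)
    (heqp : ∀ x : ℝ,
      deriv (deriv ψp) x + (b x + 2 * lam) * deriv ψp x
        + (lam ^ 2 + lam * b x + r x) * ψp x = kp * ψp x)
    (hψm : ContDiff ℝ 2 ψm) (hψmper : Function.Periodic ψm 1) (hψmpos : ∀ x, 0 < ψm x)
    (heqm : ∀ x : ℝ,
      deriv (deriv ψm) x - (b x + 2 * lam) * deriv ψm x
        + (lam ^ 2 + lam * b x + r x) * ψm x = km * ψm x) :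
    kp = km := by
  subst hr
  have hψp₁ := hψp.differentiable two_ne_zero
  have hψm₁ := hψm.differentiable two_ne_zero
  have hf := hasDerivAt_deriv_add_const_mul (u := fun x => b x + lam - γ) (v := γ + lam)
    (μ := β + γ ^ 2) (k := kp) hψp₁ hψp.differentiable_deriv_two
    fun x => by linear_combination heqp x
  have hg := hasDerivAt_deriv_add_const_mul (u := fun x => -(b x + lam - γ)) (v := -(γ + lam))
    (μ := β + γ ^ 2) (k := km) hψm₁ hψm.differentiable_deriv_two
    fun x => by linear_combination heqm x
  refine sub_left_inj.mp <| eq_of_periodic_adjoint_system (u := fun x => b x + lam - γ)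
    (v := γ + lam) (cp := kp - (β + γ ^ 2)) (cm := km - (β + γ ^ 2)) one_pos hψpper hψmper
    (fun x => by simp only [hψpper.deriv x, hψpper x])
    (fun x => by simp only [hψmper.deriv x, hψmper x]) hψppos hψmpos
    (fun x => (hψp₁ x).hasDerivAt.congr_deriv (by ring))
    (fun x => (hψm₁ x).hasDerivAt.congr_deriv (by ring)) hf
    (fun x => (hg x).congr_deriv (by ring))
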